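/- For every natural number n ≥ 1, E(f_{n+3}, f_{n+4}, f_{n+5}) = (f_{n+2} + 2·f_{n+3})·(23·f_{n+1}^2 + 15·f_n^2 − 9·f_{n−1}^2). -/

import Mathlib

/-- Fibonacci numbers as integers. -/
noncomputable def f (n : ℕ) : ℤ := (Nat.fib n : ℤ)

/-- `E x y z = x^3 + y^3 + z^3 - 3xyz`. -/
def E (x y z : ℤ) : ℤ := x ^ 3 + y ^ 3 + z ^ 3 - 3 * x * y * z

/-! `E` factors as `(x + y + z) * ((x - y)² + (y - z)² + (z - x)²) / 2`; on three consecutive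
Fibonacci numbers both factors simplify: `x + y + z = 2 f (n+5) = 2 (f (n+2) + 2 f (n+3))` and the
differences are again Fibonacci numbers. What remains is a quadratic identity between Fibonacci
numbers, which holds for any sequence with the Fibonacci recurrence since both sides are
quadratic forms in two consecutive terms. -/

theorem E_self_add (x y : ℤ) : E x y (x + y) = (x + y) * ((y - x) ^ 2 + x ^ 2 + y ^ 2) := by
  unfold E
  ring

theorem f_add_two (n : ℕ) : f (n + 2) = f n + f (n + 1) := by
  simp only [f, Nat.fib_add_two, Nat.cast_add]

theorem sq_add_sq_add_sq_of_fib_rec {R : Type*} [CommRing R] {u : ℕ → R}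
    (hu : ∀ k, u (k + 2) = u k + u (k + 1)) (m : ℕ) :
    u (m + 3) ^ 2 + u (m + 4) ^ 2 + u (m + 5) ^ 2 =
      23 * u (m + 2) ^ 2 + 15 * u (m + 1) ^ 2 - 9 * u m ^ 2 := by
  simp only [hu]
  ring

theorem stmt4 (n : ℕ) (hn : 1 ≤ n) :
    E (f (n + 3)) (f (n + 4)) (f (n + 5)) =
      (f (n + 2) + 2 * f (n + 3)) *
        (23 * f (n + 1) ^ 2 + 15 * f n ^ 2 - 9 * f (n - 1) ^ 2) := by
  obtain ⟨m, rfl⟩ : ∃ m, n = m + 1 := ⟨n - 1, by omega⟩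
  have hsum : f (m + 4) + f (m + 5) = f (m + 3) + 2 * f (m + 4) := by
    rw [f_add_two (m + 3)]
    ring
  have hdiff : f (m + 5) - f (m + 4) = f (m + 3) := by
    rw [f_add_two (m + 3)]
    ring
  rw [f_add_two (m + 4), E_self_add, hsum, hdiff, Nat.add_sub_cancel]
  exact congrArg _ (sq_add_sq_add_sq_of_fib_rec f_add_two m)
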